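/- arXiv:1909.07779 — 5 statements merged into one kernel-verified Lean document; each statement's English description precedes it below -/
import Mathlib

section
/- Viewing Φ₂(X,Y) as a polynomial in Y with coefficients in ℤ[X], the resultant with respect to Y of Φ₂(X,Y) and its partial derivative ∂Φ₂/∂Y(X,Y) equals −4·X²·(X − 1728)·(X + 3375)²·(X² + 191025X − 121287375)² in ℤ[X]. -/
/-- The classical modular polynomial of level 2, as a function of two ring elements. -/
def Phi2 {R : Type*} [CommRing R] (x y : R) : R :=
  -x ^ 2 * y ^ 2 + x ^ 3 + 1488 * x ^ 2 * y + 1488 * x * y ^ 2 + y ^ 3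
    - 162000 * x ^ 2 + 40773375 * x * y - 162000 * y ^ 2
    + 8748000000 * x + 8748000000 * y - 157464000000000

/-- The Sylvester matrix of two univariate polynomials `f` and `g`, regarded as polynomials of
degree (at most) `m` and `n` respectively.  The first `n` rows contain the shifted coefficient
sequences of `f` and the last `m` rows the shifted coefficient sequences of `g`. -/
def sylvesterMatrix {R : Type*} [CommRing R] (m n : ℕ) (f g : Polynomial R) :
    Matrix (Fin (m + n)) (Fin (m + n)) R :=
  fun i j =>
    if (i : ℕ) < n then
      -- row `i` (for `i < n`) carries the coefficients of `f`, shifted by `i`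
      if (i : ℕ) ≤ (j : ℕ) ∧ (j : ℕ) ≤ m + i then f.coeff (m + i - j) else 0
    else
      -- row `n + k` carries the coefficients of `g`, shifted by `k = i - n`
      if (i : ℕ) - n ≤ (j : ℕ) ∧ (j : ℕ) ≤ n + ((i : ℕ) - n) then
        g.coeff (n + ((i : ℕ) - n) - j)
      else 0

/-- The resultant of two univariate polynomials of degrees (at most) `m` and `n`:
the determinant of their Sylvester matrix. -/
noncomputable def resultant {R : Type*} [CommRing R] (m n : ℕ) (f g : Polynomial R) : R :=
  (sylvesterMatrix m n f g).det

/-!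
As a polynomial in `Y`, `Φ₂` is a monic cubic over `ℤ[X]`, so its resultant with `∂Φ₂/∂Y` is
minus its discriminant. The Sylvester matrix used here is Mathlib's `Polynomial.sylvester`
transposed, with rows and columns both listed in reverse order, so the two resultants agree and
Mathlib's relation between `resultant f f'` and `discr f` applies. What remains is the
factorisation of the cubic discriminant formula, an identity in `ℤ[X]`.
-/

open Polynomial

theorem resultant_eq_polynomial_resultant {R : Type*} [CommRing R] (m n : ℕ) (f g : R[X]) :
    resultant m n f g = f.resultant g m n := by
  have hsylvester : sylvesterMatrix m n f g =
      (f.sylvester g m n).transpose.submatrix Fin.revPerm Fin.revPerm := by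
    ext i j
    simp only [sylvesterMatrix, sylvester, Matrix.submatrix_apply, Matrix.transpose_apply,
      Matrix.of_apply, Fin.addCases, Fin.revPerm_apply, Fin.val_rev, Set.mem_Icc,
      Fin.val_subNat, Fin.val_castLT, Fin.val_cast, eq_rec_constant]
    have hi := i.isLt
    have hj := j.isLt
    split_ifs <;> first | rfl | omega | (congr 1; omega)
  rw [_root_.resultant, hsylvester, Matrix.det_submatrix_equiv_self, Matrix.det_transpose,
    Polynomial.resultant]

namespace Cubic

variable {R : Type*} [CommRing R] {P : Cubic R}

theorem discr_toPoly (ha : P.a ≠ 0) : P.toPoly.discr = P.discr := by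
  rw [discr_of_degree_eq_three (degree_of_a_ne_zero ha), coeff_eq_a, coeff_eq_b, coeff_eq_c,
    coeff_eq_d, Cubic.discr]

theorem resultant_toPoly_derivative (ha : P.a ≠ 0) :
    resultant 3 2 P.toPoly (derivative P.toPoly) = -(P.a * P.discr) := by
  have hpos : 0 < P.toPoly.degree := by
    rw [degree_of_a_ne_zero ha]
    decide
  calc resultant 3 2 P.toPoly (derivative P.toPoly)
      = P.toPoly.resultant (derivative P.toPoly) P.toPoly.natDegree
          (P.toPoly.natDegree - 1) := by
        rw [resultant_eq_polynomial_resultant, natDegree_of_a_ne_zero ha]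
    _ = (-1) ^ (3 * 2 / 2) * P.a * P.discr := by
        rw [resultant_deriv hpos, natDegree_of_a_ne_zero ha, leadingCoeff_of_a_ne_zero ha,
          discr_toPoly ha]
    _ = -(P.a * P.discr) := by ring

end Cubic

theorem Phi2_C_X_X_eq_toPoly :
    Phi2 (C X : ℤ[X][X]) X =
      Cubic.toPoly ⟨1, -X ^ 2 + 1488 * X - 162000, 1488 * X ^ 2 + 40773375 * X + 8748000000,
        X ^ 3 - 162000 * X ^ 2 + 8748000000 * X - 157464000000000⟩ := by
  simp only [Phi2, Cubic.toPoly, map_add, map_sub, map_mul, map_pow, map_neg, map_ofNat, map_one]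
  ring

/-- Viewing `Φ₂(X,Y)` as a polynomial in `Y` over `ℤ[X]` (of degree 3, its derivative in `Y`
having degree 2), the resultant with respect to `Y` of `Φ₂` and `∂Φ₂/∂Y` equals
`−4·X²·(X − 1728)·(X + 3375)²·(X² + 191025X − 121287375)²` in `ℤ[X]`. -/
theorem resultant_phi2_deriv :
    resultant 3 2
        (Phi2 (Polynomial.C Polynomial.X : Polynomial (Polynomial ℤ)) Polynomial.X)
        (Polynomial.derivative
          (Phi2 (Polynomial.C Polynomial.X : Polynomial (Polynomial ℤ)) Polynomial.X)) =
      -4 * Polynomial.X ^ 2 * (Polynomial.X - 1728) * (Polynomial.X + 3375) ^ 2 *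
        (Polynomial.X ^ 2 + 191025 * Polynomial.X - 121287375) ^ 2 := by
  rw [Phi2_C_X_X_eq_toPoly, Cubic.resultant_toPoly_derivative one_ne_zero, Cubic.discr]
  ring
end

section
/- Let K be a field of characteristic different from 2 and let j₁, j₂ ∈ K. If (Y − j₂)² divides the cubic Φ₂(j₁, Y) in K[Y], then j₁ = 0, or j₁ = 1728, or j₁ = −3375, or j₁² + 191025·j₁ − 121287375 = 0 in K (where the integers 1728, −3375, 191025, 121287375 are interpreted via the canonical map ℤ → K). -/
/-- If `K` is a field of characteristic different from 2 and `(Y − j₂)²` divides the cubic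
`Φ₂(j₁, Y)` in `K[Y]`, then `j₁ = 0`, `j₁ = 1728`, `j₁ = −3375`, or
`j₁² + 191025·j₁ − 121287375 = 0`. -/
theorem double_root_phi2 {K : Type*} [Field K] (hchar : ringChar K ≠ 2) (j₁ j₂ : K)
    (h : (Polynomial.X - Polynomial.C j₂) ^ 2 ∣
      Phi2 (Polynomial.C j₁ : Polynomial K) Polynomial.X) :
    j₁ = 0 ∨ j₁ = 1728 ∨ j₁ = -3375 ∨ j₁ ^ 2 + 191025 * j₁ - 121287375 = 0 := by
  obtain ⟨q, hq⟩ := h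
  have E1 : Phi2 j₁ j₂ = 0 := by
    have := congrArg (Polynomial.eval j₂) hq
    simpa [Phi2, Polynomial.eval_mul, Polynomial.eval_pow] using this
  have E1' : -j₁ ^ 2 * j₂ ^ 2 + j₁ ^ 3 + 1488 * j₁ ^ 2 * j₂ + 1488 * j₁ * j₂ ^ 2 + j₂ ^ 3
      - 162000 * j₁ ^ 2 + 40773375 * j₁ * j₂ - 162000 * j₂ ^ 2
      + 8748000000 * j₁ + 8748000000 * j₂ - 157464000000000 = 0 := E1
  have E2 : -(j₁ ^ 2 * (2 * j₂)) + 1488 * j₁ ^ 2 + 1488 * j₁ * (2 * j₂) + 3 * j₂ ^ 2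
      + 40773375 * j₁ - 162000 * (2 * j₂) + 8748000000 = 0 := by
    have := congrArg (Polynomial.eval j₂) (congrArg Polynomial.derivative hq)
    simp [Phi2, Polynomial.derivative_mul, Polynomial.derivative_pow,
      Polynomial.eval_mul, Polynomial.eval_pow, Polynomial.eval_add,
      Polynomial.eval_sub] at this
    linear_combination this
  have h2 : (2 : K) ≠ 0 := by
    simpa using (Ring.two_ne_zero hchar)
  have key : (-4 : K) * (j₁ ^ 2 * ((j₁ - 1728) * ((j₁ + 3375) ^ 2 *
      (j₁ ^ 2 + 191025 * j₁ - 121287375) ^ 2))) = 0 := by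
    linear_combination
      ((372673001250000 : K)*j₁ + (-3626592750)*j₁*j₂ + (-5394454200000)*j₁^2
        + (15202080)*j₁^2*j₂ + (19542317580)*j₁^3 + (-17856)*j₁^3*j₂
        + (-28491408)*j₁^4 + (6)*j₁^4*j₂ + (17856)*j₁^5 + (-4)*j₁^6) * E1' +
      ((6708114022500000000 : K)*j₁ + (-189503003250000)*j₁*j₂ + (1208864250)*j₁*j₂^2
        + (3657085407562500)*j₁^2 + (2671385508000)*j₁^2*j₂ + (-5067360)*j₁^2*j₂^2
        + (-76224932550000)*j₁^3 + (-9751879170)*j₁^3*j₂ + (5952)*j₁^3*j₂^2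
        + (108825171840)*j₁^4 + (14246448)*j₁^4*j₂ + (-2)*j₁^4*j₂^2
        + (-36345084)*j₁^5 + (-8928)*j₁^5*j₂ + (-1488)*j₁^6 + (2)*j₁^6*j₂) * E2
  have h4 : (-4 : K) ≠ 0 := by
    have : (4 : K) = 2 * 2 := by norm_num
    simp only [ne_eq, neg_eq_zero]
    rw [this]
    exact mul_ne_zero h2 h2
  have := (mul_eq_zero.mp key).resolve_left h4
  rcases mul_eq_zero.mp this with h0 | this
  · exact Or.inl (pow_eq_zero_iff (by norm_num) |>.mp h0)
  rcases mul_eq_zero.mp this with h0 | this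
  · exact Or.inr (Or.inl (by linear_combination h0))
  rcases mul_eq_zero.mp this with h0 | h0
  · refine Or.inr (Or.inr (Or.inl ?_))
    have := pow_eq_zero_iff (n := 2) (by norm_num) |>.mp h0
    linear_combination this
  · exact Or.inr (Or.inr (Or.inr (pow_eq_zero_iff (n := 2) (by norm_num) |>.mp h0)))
end

section
/- Let K be a field of prime characteristic p and let j ∈ K satisfy Φ₂(j,j) = 0. Then j^p = j; that is, every j-invariant admitting a 2-isogeny to itself lies in the prime subfield 𝔽_p of K, so no j-invariant in 𝔽_{p²} \ 𝔽_p admits a self 2-isogeny. -/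
lemma intCast_pow_card {K : Type*} [Field K] (p : ℕ) (hp : p.Prime) [CharP K p] (m : ℤ) :
    (m : K) ^ p = m := by
  haveI := Fact.mk hp
  let f := ZMod.castHom (dvd_refl p) K
  calc (m : K) ^ p = f ((m : ZMod p) ^ p) := by rw [map_pow, map_intCast]
    _ = f (m : ZMod p) := by rw [ZMod.pow_card]
    _ = m := map_intCast f m

/-- In a field `K` of prime characteristic `p`, any `j` with `Φ₂(j,j) = 0` satisfies `j^p = j`,
i.e. lies in the prime subfield `𝔽_p`; so no `j`-invariant in `𝔽_{p²} \ 𝔽_p` admits a self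
2-isogeny. -/
theorem self_two_isogeny_in_prime_field {K : Type*} [Field K] (p : ℕ) (hp : p.Prime)
    [CharP K p] (j : K) (h : Phi2 j j = 0) : j ^ p = j := by
  have hf : (j - 1728) * ((j + 3375) ^ 2 * (j - 8000)) = 0 := by
    have : Phi2 j j = -((j - 1728) * ((j + 3375) ^ 2 * (j - 8000))) := by
      unfold Phi2; ring
    rw [this, neg_eq_zero] at h
    exact h
  have key : ∃ m : ℤ, j = (m : K) := by
    rcases mul_eq_zero.mp hf with h1 | h2
    · exact ⟨1728, by linear_combination h1⟩
    · rcases mul_eq_zero.mp h2 with h3 | h4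
      · exact ⟨-3375, by have := pow_eq_zero_iff (n := 2) two_ne_zero |>.mp h3
                         push_cast; linear_combination this⟩
      · exact ⟨8000, by linear_combination h4⟩
  obtain ⟨m, rfl⟩ := key
  exact intCast_pow_card p hp m
end

section
/- Let p > 3 be a prime and let K be the algebraic closure of 𝔽_p. If E and E' are elliptic curves over K with j(E') = j(E)^p and E is supersingular, then E' is supersingular. Hence the Frobenius map j ↦ j^p is an involution on the set of supersingular j-invariants. -/
open WeierstrassCurve

open Classical in
/-- An elliptic curve over the algebraic closure of `𝔽_p` is supersingular if its group of
points contains no point of additive order `p`. -/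
def Supersingular (p : ℕ) [Fact p.Prime]
    (E : WeierstrassCurve (AlgebraicClosure (ZMod p))) [E.IsElliptic] : Prop :=
  ∀ P : E.toAffine.Point, addOrderOf P ≠ p

/-!
Over an algebraically closed field, curves with the same `j`-invariant differ by a change of
variables. Since `j(E'^{(1/p)}) = j(E)`, where `E'^{(1/p)}` is `E'` with the inverse Frobenius
applied to its coefficients, `E` is a change of variables of `E'^{(1/p)}`. Both operations induce
injective homomorphisms on the groups of points, so a point of order `p` on `E'` would give one on
`E`.
-/

namespace WeierstrassCurve.Affine

variable {F : Type*} [Field F] (C : VariableChange F)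

/-- Inverse of the substitution `(x, y) ↦ (u²x + r, u³y + u²sx + t)` that defines `C • W`. -/
noncomputable def variableChangeX (x : F) : F := (C.u⁻¹ : Fˣ) ^ 2 * (x - C.r)

noncomputable def variableChangeY (x y : F) : F :=
  (C.u⁻¹ : Fˣ) ^ 3 * (y - C.s * x + C.r * C.s - C.t)

lemma variableChangeX_inj {x₁ x₂ : F} :
    variableChangeX C x₁ = variableChangeX C x₂ ↔ x₁ = x₂ := by
  rw [variableChangeX, variableChangeX, mul_right_inj' (pow_ne_zero 2 C.u⁻¹.ne_zero),
    sub_left_inj]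

lemma variableChangeY_inj {x y₁ y₂ : F} :
    variableChangeY C x y₁ = variableChangeY C x y₂ ↔ y₁ = y₂ := by
  rw [variableChangeY, variableChangeY, mul_right_inj' (pow_ne_zero 3 C.u⁻¹.ne_zero),
    sub_left_inj, add_left_inj, sub_left_inj]

variable (W : Affine F) (x y : F)

lemma evalEval_polynomial_variableChange :
    (C • W).toAffine.polynomial.evalEval (variableChangeX C x) (variableChangeY C x y) =
      (C.u⁻¹ : Fˣ) ^ 6 * W.polynomial.evalEval x y := by
  simp only [evalEval_polynomial, variableChangeX, variableChangeY, variableChange_a₁,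
    variableChange_a₂, variableChange_a₃, variableChange_a₄, variableChange_a₆]
  ring

lemma evalEval_polynomialX_variableChange :
    (C • W).toAffine.polynomialX.evalEval (variableChangeX C x) (variableChangeY C x y) =
      (C.u⁻¹ : Fˣ) ^ 4 * (W.polynomialX.evalEval x y + C.s * W.polynomialY.evalEval x y) := by
  simp only [evalEval_polynomialX, evalEval_polynomialY, variableChangeX, variableChangeY,
    variableChange_a₁, variableChange_a₂, variableChange_a₄]
  ring

lemma evalEval_polynomialY_variableChange :
    (C • W).toAffine.polynomialY.evalEval (variableChangeX C x) (variableChangeY C x y) =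
      (C.u⁻¹ : Fˣ) ^ 3 * W.polynomialY.evalEval x y := by
  simp only [evalEval_polynomialY, variableChangeX, variableChangeY, variableChange_a₁,
    variableChange_a₃]
  ring

lemma negY_variableChange :
    (C • W).toAffine.negY (variableChangeX C x) (variableChangeY C x y) =
      variableChangeY C x (W.negY x y) := by
  simp only [negY, variableChangeX, variableChangeY, variableChange_a₁, variableChange_a₃]
  ring

variable (x₁ x₂ y₁ ℓ : F)

/-- `u⁻¹ (ℓ - s)` is the transformed slope, by `slope_variableChange`. -/
lemma addX_variableChange :
    (C • W).toAffine.addX (variableChangeX C x₁) (variableChangeX C x₂)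
      ((C.u⁻¹ : Fˣ) * (ℓ - C.s)) = variableChangeX C (W.addX x₁ x₂ ℓ) := by
  simp only [addX, variableChangeX, variableChange_a₁, variableChange_a₂]
  ring

lemma addY_variableChange :
    (C • W).toAffine.addY (variableChangeX C x₁) (variableChangeX C x₂)
      (variableChangeY C x₁ y₁) ((C.u⁻¹ : Fˣ) * (ℓ - C.s)) =
      variableChangeY C (W.addX x₁ x₂ ℓ) (W.addY x₁ x₂ y₁ ℓ) := by
  simp only [addY, negAddY, negY, addX, variableChangeX, variableChangeY, variableChange_a₁,
    variableChange_a₂, variableChange_a₃]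
  ring

variable {W x y}

lemma Equation.variableChange (h : W.Equation x y) :
    (C • W).toAffine.Equation (variableChangeX C x) (variableChangeY C x y) := by
  rw [Equation, evalEval_polynomial_variableChange, h, mul_zero]

lemma Nonsingular.variableChange (h : W.Nonsingular x y) :
    (C • W).toAffine.Nonsingular (variableChangeX C x) (variableChangeY C x y) := by
  refine ⟨h.1.variableChange C, ?_⟩
  by_cases hY : W.polynomialY.evalEval x y = 0
  · left
    rw [evalEval_polynomialX_variableChange, hY, mul_zero, add_zero]
    exact mul_ne_zero (pow_ne_zero 4 C.u⁻¹.ne_zero) (h.2.resolve_right (not_not.mpr hY))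
  · right
    rw [evalEval_polynomialY_variableChange]
    exact mul_ne_zero (pow_ne_zero 3 C.u⁻¹.ne_zero) hY

variable {x₁ x₂ y₁} {y₂ : F}

lemma variableChangeY_ne_negY (hx : x₁ = x₂) (hy : y₁ ≠ W.negY x₂ y₂) :
    variableChangeY C x₁ y₁ ≠
      (C • W).toAffine.negY (variableChangeX C x₂) (variableChangeY C x₂ y₂) := by
  rw [hx, negY_variableChange, Ne, variableChangeY_inj]
  exact hx ▸ hy

variable [DecidableEq F]

lemma slope_variableChange (h₁ : W.Equation x₁ y₁) (h₂ : W.Equation x₂ y₂)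
    (hxy : x₁ = x₂ → y₁ ≠ W.negY x₂ y₂) :
    (C • W).toAffine.slope (variableChangeX C x₁) (variableChangeX C x₂)
      (variableChangeY C x₁ y₁) (variableChangeY C x₂ y₂) =
      (C.u⁻¹ : Fˣ) * (W.slope x₁ x₂ y₁ y₂ - C.s) := by
  by_cases hx : x₁ = x₂
  · subst hx
    have hy := hxy rfl
    obtain rfl : y₁ = y₂ := Y_eq_of_Y_ne h₁ h₂ rfl hy
    have hY : W.polynomialY.evalEval x₁ y₁ ≠ 0 := by
      rw [evalEval_polynomialY]
      exact fun h ↦ hy (by rw [negY]; linear_combination h)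
    rw [slope_of_Y_ne_eq_evalEval rfl (variableChangeY_ne_negY C rfl hy),
      slope_of_Y_ne_eq_evalEval rfl hy, evalEval_polynomialX_variableChange,
      evalEval_polynomialY_variableChange, Units.val_inv_eq_inv_val]
    field_simp
    ring
  · have hx' : variableChangeX C x₁ ≠ variableChangeX C x₂ :=
      (variableChangeX_inj C).not.mpr hx
    have hxs : x₁ - x₂ ≠ 0 := sub_ne_zero.mpr hx
    rw [slope_of_X_ne hx', slope_of_X_ne hx, variableChangeX, variableChangeX, variableChangeY,
      variableChangeY, Units.val_inv_eq_inv_val, div_eq_iff (by simpa [← mul_sub] using hxs)]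
    field_simp
    ring

namespace Point

noncomputable def variableChange : W.Point →+ (C • W).toAffine.Point where
  toFun
    | 0 => 0
    | some _ _ h => some _ _ (h.variableChange C)
  map_zero' := rfl
  map_add' := by
    rintro (_ | ⟨x₁, y₁, h₁⟩) (_ | ⟨x₂, y₂, h₂⟩)
    any_goals rfl
    by_cases hxy : x₁ = x₂ ∧ y₁ = W.negY x₂ y₂
    · rw [add_of_Y_eq hxy.1 hxy.2, add_of_Y_eq (by rw [hxy.1])
        (by rw [hxy.1, hxy.2, negY_variableChange])]
    · have hxy' (hx : x₁ = x₂) : y₁ ≠ W.negY x₂ y₂ := fun hy ↦ hxy ⟨hx, hy⟩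
      rw [add_some hxy, add_some fun h ↦ variableChangeY_ne_negY C
        ((variableChangeX_inj C).mp h.1) (hxy' ((variableChangeX_inj C).mp h.1)) h.2]
      simp only [slope_variableChange C h₁.1 h₂.1 hxy', addX_variableChange,
        addY_variableChange]

lemma variableChange_injective : Function.Injective (variableChange (W := W) C) := by
  rintro (_ | ⟨x₁, y₁, _⟩) (_ | ⟨x₂, y₂, _⟩) h
  any_goals contradiction
  · rfl
  · obtain ⟨hx, hy⟩ := some.inj h
    obtain rfl := (variableChangeX_inj C).mp hx
    obtain rfl := (variableChangeY_inj C).mp hy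
    rfl

variable {K : Type*} [Field K] [DecidableEq K] (f : F →+* K)

noncomputable def mapRingHom : W.Point →+ (W.map f).toAffine.Point where
  toFun
    | 0 => 0
    | some _ _ h => some _ _ ((W.map_nonsingular f.injective ..).mpr h)
  map_zero' := rfl
  map_add' := by
    rintro (_ | ⟨x₁, y₁, h₁⟩) (_ | ⟨x₂, y₂, h₂⟩)
    any_goals rfl
    by_cases hxy : x₁ = x₂ ∧ y₁ = W.negY x₂ y₂
    · rw [add_of_Y_eq hxy.1 hxy.2, add_of_Y_eq (by rw [hxy.1]) (by rw [map_negY, hxy.2])]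
    · rw [add_some hxy,
        add_some fun h ↦ hxy ⟨f.injective h.1, f.injective (W.map_negY f x₂ y₂ ▸ h.2)⟩]
      simp only [map_slope, map_addX, map_addY]

lemma mapRingHom_injective : Function.Injective (mapRingHom (W := W) f) := by
  rintro (_ | ⟨x₁, y₁, _⟩) (_ | ⟨x₂, y₂, _⟩) h
  any_goals contradiction
  · rfl
  · obtain ⟨hx, hy⟩ := some.inj h
    obtain rfl := f.injective hx
    obtain rfl := f.injective hy
    rfl

end Point

end WeierstrassCurve.Affine

theorem supersingular_of_j_frobenius_general (p : ℕ) [Fact p.Prime]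
    (E E' : WeierstrassCurve (AlgebraicClosure (ZMod p))) [E.IsElliptic] [E'.IsElliptic]
    (hj : E'.j = E.j ^ p) (hE : Supersingular p E) : Supersingular p E' := by
  classical
  let φ := frobeniusEquiv (AlgebraicClosure (ZMod p)) p
  have hj' : (E'.map φ.symm.toRingHom).j = E.j := by
    rw [map_j, hj]
    exact φ.symm_apply_apply E.j
  obtain ⟨C, rfl⟩ := exists_variableChange_of_j_eq _ _ hj'
  intro P hP
  apply hE (Affine.Point.variableChange C (Affine.Point.mapRingHom φ.symm.toRingHom P))
  rwa [addOrderOf_injective _ (Affine.Point.variableChange_injective C),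
    addOrderOf_injective _ (Affine.Point.mapRingHom_injective _)]

/-- For `p > 3` prime, if `E` and `E'` are elliptic curves over the algebraic closure of `𝔽_p`
with `j(E') = j(E)^p` and `E` is supersingular, then so is `E'`.  Hence Frobenius
`j ↦ j^p` is an involution on the set of supersingular `j`-invariants. -/
theorem supersingular_of_j_frobenius (p : ℕ) [Fact p.Prime] (hp : 3 < p)
    (E E' : WeierstrassCurve (AlgebraicClosure (ZMod p))) [E.IsElliptic] [E'.IsElliptic]
    (hj : E'.j = E.j ^ p) (hE : Supersingular p E) : Supersingular p E' :=
  supersingular_of_j_frobenius_general p E E' hj hE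
end

section
/- Let p be a prime with p ≡ 1 (mod 4) and p > 7, let K = ℚ(√−p), and let P be a prime ideal of the ring of integers of K lying over 2. Then the class of P has order exactly 2 in the ideal class group of K. (The ideal (2) is ramified in K, and since p > 7 there is no element of norm 2 in ℤ[√−p], so P is not principal while P² = (2) is.) -/
/-!
Let `a = √-p ∈ 𝓞 K` and `p = 4t + 1`. Then `(1 + a)² = 2(a - 2t)` and
`1 = (1 + a) - (a - 2t) - 2t`, so `Q = (2, 1 + a)` satisfies `Q² = (2)`. Hence `N(Q) = 2`, `Q` is
maximal, and every prime `P` over `2` contains `1 + a`, so `P = Q` and `P²` is principal.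

If `P = (x)` then `N(x) = ±2`. Writing `x = c + d a` with `c, d ∈ ℚ`, we have `s = 2c = Tr x ∈ ℤ`
and `s² + p (2d)² = ±8`. Since `±8` is not a square, `d ≠ 0`, so `p (2d)²` is an integer strictly
between `0` and `p`; but then `(2pd)² = p · m` with `0 < m < p`, which no integer square is.
-/

open NumberField Module

theorem Nat.Prime.mul_sq_ne_intCast {p : ℕ} (hp : p.Prime) {m : ℤ} (hm0 : 0 < m) (hmp : m < p)
    (e : ℚ) : (p : ℚ) * e ^ 2 ≠ m := by
  intro h
  obtain ⟨w, hw⟩ : IsSquare ((p : ℤ) * m) :=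
    Rat.isSquare_intCast_iff.mp ⟨p * e, by push_cast; rw [← h]; ring⟩
  obtain ⟨k, rfl⟩ : (p : ℤ) ∣ w :=
    (Nat.prime_iff_prime_int.mp hp).dvd_of_dvd_pow (n := 2) ⟨m, by rw [sq, ← hw]⟩
  have hm : m = p * k ^ 2 :=
    mul_left_cancel₀ (Int.natCast_ne_zero.mpr hp.ne_zero) (by rw [hw]; ring)
  have : (p : ℤ) ≤ m := Int.le_of_dvd hm0 ⟨k ^ 2, hm⟩
  omega

namespace Ideal

theorem span_pair_sq_eq_span_singleton {R : Type*} [CommRing R] {x y b : R} (hy : y ^ 2 = x * b)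
    (htop : span {x, y, b} = ⊤) : span {x, y} ^ 2 = span {x} := by
  calc span {x, y} ^ 2 = span {x} * span {x, y, b} := by
        rw [sq, span_pair_mul_span_pair, span_mul_span', ← sq y, hy, mul_comm y x]
        simp [Set.singleton_mul, Set.image_insert_eq]
    _ = span {x} := by rw [htop, mul_top]

theorem eq_of_le_of_absNorm_prime {S : Type*} [CommRing S] [IsDedekindDomain S] [Free ℤ S]
    [Module.Finite ℤ S] {I J : Ideal S} (hI : (absNorm I).Prime) (hJ : J ≠ ⊤) (hIJ : I ≤ J) :
    I = J :=
  have hI0 : I ≠ ⊥ := by rintro rfl; simp [Nat.not_prime_zero] at hI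
  ((isPrime_of_irreducible_absNorm hI).isMaximal hI0).eq_of_le hJ hIJ

end Ideal

section QuadraticExtension

variable {F K : Type*} [Field F] [Field K] [Algebra F K] {α : K}

theorem linearIndependent_one_of_notMem_range (hα : α ∉ Set.range (algebraMap F K)) :
    LinearIndependent F ![1, α] :=
  (LinearIndependent.pair_iff' one_ne_zero).mpr fun a h ↦
    hα ⟨a, by simpa [Algebra.smul_def] using h⟩

variable (hdeg : finrank F K = 2) (hα : α ∉ Set.range (algebraMap F K))

noncomputable def basisOneOfFinrankEqTwo : Basis (Fin 2) F K :=
  basisOfLinearIndependentOfCardEqFinrank (linearIndependent_one_of_notMem_range hα)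
    (by simp [hdeg])

@[simp]
theorem coe_basisOneOfFinrankEqTwo : ⇑(basisOneOfFinrankEqTwo hdeg hα) = ![1, α] :=
  coe_basisOfLinearIndependentOfCardEqFinrank _ _

include hdeg hα in
theorem exists_eq_algebraMap_add_algebraMap_mul (x : K) :
    ∃ c d : F, x = algebraMap F K c + algebraMap F K d * α := by
  set B := basisOneOfFinrankEqTwo hdeg hα
  refine ⟨B.repr x 0, B.repr x 1, ?_⟩
  conv_lhs => rw [← B.sum_repr x]
  simp [B, Fin.sum_univ_two, Algebra.smul_def]

theorem leftMulMatrix_basisOneOfFinrankEqTwo {q : F} (hq : α ^ 2 = algebraMap F K q) (c d : F) :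
    Algebra.leftMulMatrix (basisOneOfFinrankEqTwo hdeg hα)
      (algebraMap F K c + algebraMap F K d * α) = !![c, q * d; d, c] := by
  set B := basisOneOfFinrankEqTwo hdeg hα
  have hmul0 : (algebraMap F K c + algebraMap F K d * α) * B 0 = c • B 0 + d • B 1 := by
    simp [B, Algebra.smul_def]
  have hmul1 : (algebraMap F K c + algebraMap F K d * α) * B 1 = (q * d) • B 0 + c • B 1 := by
    simp only [B, coe_basisOneOfFinrankEqTwo, Algebra.smul_def]
    simp only [Matrix.cons_val_zero, Matrix.cons_val_one, mul_one, map_mul]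
    linear_combination algebraMap F K d * hq
  rw [Matrix.eta_fin_two (Algebra.leftMulMatrix B _)]
  simp only [Algebra.leftMulMatrix_eq_repr_mul, hmul0, hmul1, map_add, map_smul, B.repr_self]
  simp

include hdeg hα in
theorem norm_algebraMap_add_algebraMap_mul {q : F} (hq : α ^ 2 = algebraMap F K q) (c d : F) :
    Algebra.norm F (algebraMap F K c + algebraMap F K d * α) = c ^ 2 - q * d ^ 2 := by
  rw [Algebra.norm_eq_matrix_det (basisOneOfFinrankEqTwo hdeg hα),
    leftMulMatrix_basisOneOfFinrankEqTwo hdeg hα hq, Matrix.det_fin_two_of]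
  ring

include hdeg hα in
theorem trace_algebraMap_add_algebraMap_mul {q : F} (hq : α ^ 2 = algebraMap F K q) (c d : F) :
    Algebra.trace F K (algebraMap F K c + algebraMap F K d * α) = 2 * c := by
  rw [Algebra.trace_eq_matrix_trace (basisOneOfFinrankEqTwo hdeg hα),
    leftMulMatrix_basisOneOfFinrankEqTwo hdeg hα hq, Matrix.trace_fin_two_of]
  ring

end QuadraticExtension

namespace NumberField.RingOfIntegers

variable {K : Type*} [Field K] [NumberField K]

theorem norm_ne_of_sq_eq_neg_prime (hdeg : finrank ℚ K = 2) {p : ℕ} (hp : p.Prime) {α : K}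
    (hα : α ^ 2 = -(p : K)) {n : ℤ} (hn : ¬IsSquare n) (hnp : 4 * n < p) (x : 𝓞 K) :
    Algebra.norm ℤ x ≠ n := by
  have hαq : α ^ 2 = algebraMap ℚ K (-p) := by simpa using hα
  have hαF : α ∉ Set.range (algebraMap ℚ K) := by
    rintro ⟨r, rfl⟩
    have : r ^ 2 = -(p : ℚ) := (algebraMap ℚ K).injective (by simpa using hα)
    nlinarith [sq_nonneg r, (Nat.cast_pos.mpr hp.pos : (0 : ℚ) < p)]
  obtain ⟨c, d, hx⟩ := exists_eq_algebraMap_add_algebraMap_mul hdeg hαF (x : K)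
  have hnorm : (Algebra.norm ℤ x : ℚ) = c ^ 2 + p * d ^ 2 := by
    rw [Algebra.coe_norm_int, hx, norm_algebraMap_add_algebraMap_mul hdeg hαF hαq]; ring
  have htrace : (Algebra.trace ℤ (𝓞 K) x : ℚ) = 2 * c := by
    rw [Algebra.coe_trace_int, hx, trace_algebraMap_add_algebraMap_mul hdeg hαF hαq]
  set s := Algebra.trace ℤ (𝓞 K) x
  intro hxn
  have key : (s : ℚ) ^ 2 + p * (2 * d) ^ 2 = 4 * n := by
    rw [htrace, ← hxn, hnorm]; ring
  rcases eq_or_ne d 0 with rfl | hd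
  · refine hn (Rat.isSquare_intCast_iff.mp ⟨s / 2, ?_⟩)
    linear_combination -key / 4
  · refine hp.mul_sq_ne_intCast (m := 4 * n - s ^ 2) ?_ ?_ (2 * d) (by push_cast; linarith)
    · have : (0 : ℚ) < p * (2 * d) ^ 2 :=
        mul_pos (Nat.cast_pos.mpr hp.pos) (sq_pos_of_ne_zero (mul_ne_zero two_ne_zero hd))
      exact_mod_cast (show ((4 * n - s ^ 2 : ℤ) : ℚ) > 0 by push_cast; linarith)
    · nlinarith [sq_nonneg s]

theorem absNorm_span_natCast (n : ℕ) :
    Ideal.absNorm (Ideal.span {(n : 𝓞 K)}) = n ^ finrank ℚ K := by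
  rw [Ideal.absNorm_span_singleton, ← map_natCast (algebraMap ℤ (𝓞 K)), Algebra.norm_algebraMap,
    RingOfIntegers.rank]
  simp

theorem absNorm_eq_two_of_sq_eq_span_two (hdeg : finrank ℚ K = 2) {I : Ideal (𝓞 K)}
    (hI : I ^ 2 = Ideal.span {2}) : Ideal.absNorm I = 2 := by
  have : Ideal.absNorm I ^ 2 = 2 ^ 2 := by
    rw [← map_pow, hI]; simpa [hdeg] using absNorm_span_natCast (K := K) 2
  exact Nat.pow_left_injective two_ne_zero this

theorem sq_eq_span_two_of_two_mem (hdeg : finrank ℚ K = 2) {p : ℕ} (hmod : p % 4 = 1) {α : K}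
    (hα : α ^ 2 = -(p : K)) {P : Ideal (𝓞 K)} (hP : P.IsPrime) (h2 : (2 : 𝓞 K) ∈ P) :
    P ^ 2 = Ideal.span {2} := by
  have hαint : IsIntegral ℤ α := .of_pow two_pos (hα ▸ (isIntegral_natCast p).neg)
  set a : 𝓞 K := ⟨α, hαint⟩
  have ha : a ^ 2 = -(p : 𝓞 K) := by ext; push_cast; exact hα
  obtain ⟨t, rfl⟩ : ∃ t, p = 4 * t + 1 := ⟨p / 4, by omega⟩
  have hsq : (1 + a) ^ 2 = 2 * (a - 2 * t) := by push_cast at ha; linear_combination ha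
  set Q := Ideal.span {2, 1 + a}
  have hQ : Q ^ 2 = Ideal.span {2} := by
    refine Ideal.span_pair_sq_eq_span_singleton hsq ((Ideal.eq_top_iff_one _).mpr ?_)
    have hmem : (1 + a) - (a - 2 * t) - t * 2 ∈ Ideal.span {2, 1 + a, a - 2 * (t : 𝓞 K)} :=
      sub_mem (sub_mem (Ideal.subset_span (by simp)) (Ideal.subset_span (by simp)))
        (Ideal.mul_mem_left _ _ (Ideal.subset_span (by simp)))
    rwa [show (1 + a) - (a - 2 * t) - t * 2 = 1 by ring] at hmem
  have hQP : Q ≤ P := by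
    refine Ideal.span_le.mpr (Set.insert_subset h2 (Set.singleton_subset_iff.mpr ?_))
    exact hP.mem_of_pow_mem 2 (hsq ▸ P.mul_mem_right _ h2)
  have hQ_eq : Q = P := Ideal.eq_of_le_of_absNorm_prime
    (by rw [absNorm_eq_two_of_sq_eq_span_two hdeg hQ]; exact Nat.prime_two) hP.ne_top hQP
  rw [← hQ_eq, hQ]

theorem not_isPrincipal_of_absNorm_eq (hdeg : finrank ℚ K = 2) {p : ℕ} (hp : p.Prime) {α : K}
    (hα : α ^ 2 = -(p : K)) {n : ℕ} (hn : ¬IsSquare n) (hnp : 4 * n < p) {I : Ideal (𝓞 K)}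
    (hI : Ideal.absNorm I = n) : ¬I.IsPrincipal := by
  rintro ⟨x, rfl⟩
  rw [Ideal.submodule_span_eq, Ideal.absNorm_span_singleton] at hI
  rcases Int.natAbs_eq_iff.mp hI with hx | hx
  · exact norm_ne_of_sq_eq_neg_prime hdeg hp hα (Int.isSquare_natCast_iff.not.mpr hn)
      (by exact_mod_cast hnp) x hx
  · refine norm_ne_of_sq_eq_neg_prime hdeg hp hα (fun hsq ↦ hn ⟨0, ?_⟩) (by omega) x hx
    have := hsq.nonneg
    omega

end NumberField.RingOfIntegers

open NumberField.RingOfIntegers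

/-- Let `p ≡ 1 (mod 4)` be a prime with `p > 7` and let `K = ℚ(√−p)` (a number field of degree
2 over `ℚ` containing a square root of `−p`).  Every prime ideal of the ring of integers of `K`
lying over 2 has order exactly 2 in the ideal class group of `K`. -/
theorem order_two_of_prime_over_two (p : ℕ) (hp : p.Prime) (hmod : p % 4 = 1) (hgt : 7 < p)
    (K : Type*) [Field K] [NumberField K]
    (hdeg : Module.finrank ℚ K = 2) (α : K) (hα : α ^ 2 = -(p : K))
    (P : Ideal (𝓞 K)) (hPprime : P.IsPrime) (hP0 : P ≠ ⊥) (h2 : (2 : 𝓞 K) ∈ P) :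
    orderOf (ClassGroup.mk0 ⟨P, mem_nonZeroDivisors_of_ne_zero hP0⟩) = 2 := by
  have hsq : P ^ 2 = Ideal.span {2} := sq_eq_span_two_of_two_mem hdeg hmod hα hPprime h2
  refine orderOf_eq_prime ?_ ?_
  · rw [← map_pow, ClassGroup.mk0_eq_one_iff]
    exact ⟨⟨2, hsq⟩⟩
  · rw [ne_eq, ClassGroup.mk0_eq_one_iff]
    exact not_isPrincipal_of_absNorm_eq hdeg hp hα (Irreducible.not_isSquare Nat.prime_two)
      (by omega) (absNorm_eq_two_of_sq_eq_span_two hdeg hsq)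
end
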